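/- Let d be a nonnegative integer and let h, r be integers with h ≠ 0 such that the h-th powers r_1^h, ..., r_m^h of the roots of the characteristic polynomial are pairwise distinct and none of them equals 1. Then there exist polynomials P_1(x), ..., P_m(x) ∈ ℂ[x], each of degree at most d, and a constant C ∈ ℂ such that for every positive integer n, ∑_{k=1}^{n} k^d·s_{hk+r} = (∑_{k=1}^{m} P_k(n)·s_{(n+k)h+r}) + C. -/

import Mathlib

open Polynomial

lemma claimA (x : ℂ) (hx : x ≠ 1) :
    ∀ e : ℕ, ∀ R : ℂ[X], R.natDegree ≤ e →
      ∃ Q : ℂ[X], Q.natDegree ≤ e ∧ ∀ y : ℂ, x * Q.eval y - Q.eval (y - 1) = R.eval y := by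
  have hx1 : x - 1 ≠ 0 := sub_ne_zero.mpr hx
  intro e
  induction e with
  | zero =>
    intro R hR
    have hR0 : R = C (R.coeff 0) := Polynomial.eq_C_of_natDegree_le_zero hR
    refine ⟨C (R.coeff 0 / (x - 1)), by simp, fun y => ?_⟩
    rw [hR0]
    simp only [eval_C]
    field_simp
    ring_nf; simp
  | succ e ih =>
    intro R hR
    set cc := R.coeff (e + 1) with hcc
    set Q0 : ℂ[X] := C (cc / (x - 1)) * X ^ (e + 1) with hQ0
    set R' : ℂ[X] := R - (C x * Q0 - Q0.comp (X - 1)) with hR'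
    have hmonic : ((X : ℂ[X]) - 1) ^ (e+1) = (X - C 1)^(e+1) := by simp
    have hdegc : (Q0.comp (X - 1)).natDegree ≤ e + 1 := by
      calc (Q0.comp (X - 1)).natDegree = Q0.natDegree * ((X : ℂ[X]) - 1).natDegree :=
            Polynomial.natDegree_comp
        _ ≤ (e+1) * 1 := by
            apply Nat.mul_le_mul
            · exact le_trans (Polynomial.natDegree_C_mul_le _ _) (by simp)
            · rw [show ((X:ℂ[X]) - 1) = X - C 1 by rw [Polynomial.C_1],
                Polynomial.natDegree_X_sub_C]
        _ = e + 1 := by ring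
    have hcoeffc : (Q0.comp (X - 1)).coeff (e+1) = cc / (x - 1) := by
      have : Q0.comp (X - 1) = C (cc / (x - 1)) * ((X : ℂ[X]) - 1) ^ (e+1) := by
        rw [hQ0, Polynomial.mul_comp, Polynomial.C_comp, Polynomial.pow_comp,
          Polynomial.X_comp]
      rw [this, hmonic, Polynomial.coeff_C_mul]
      have hm : ((X : ℂ[X]) - C 1) ^ (e+1) |>.Monic := (Polynomial.monic_X_sub_C 1).pow _
      have hd : (((X : ℂ[X]) - C 1) ^ (e+1)).natDegree = e + 1 := by
        rw [Polynomial.natDegree_pow, Polynomial.natDegree_X_sub_C, mul_one]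
      have hco := hm.coeff_natDegree
      rw [hd] at hco
      rw [hco, mul_one]
    have hRdeg : R'.natDegree ≤ e := by
      rw [Polynomial.natDegree_le_iff_coeff_eq_zero]
      intro N hN
      rcases Nat.lt_or_ge N (e + 2) with hN2 | hN2
      · have hNe : N = e + 1 := by omega
        subst hNe
        simp only [hR', Polynomial.coeff_sub, Polynomial.coeff_C_mul]
        rw [hcoeffc]
        have : Q0.coeff (e+1) = cc / (x-1) := by
          rw [hQ0, Polynomial.coeff_C_mul, Polynomial.coeff_X_pow]; simp
        rw [this]
        field_simp
        ring
      · apply Polynomial.coeff_eq_zero_of_natDegree_lt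
        have h1 : R'.natDegree ≤ e + 1 := by
          apply le_trans (Polynomial.natDegree_sub_le _ _)
          apply max_le hR
          apply le_trans (Polynomial.natDegree_sub_le _ _)
          apply max_le _ hdegc
          exact le_trans (Polynomial.natDegree_C_mul_le _ _)
            (le_trans (Polynomial.natDegree_C_mul_le _ _) (by simp))
        omega
    obtain ⟨Q1, hQ1deg, hQ1⟩ := ih R' hRdeg
    refine ⟨Q0 + Q1, ?_, fun y => ?_⟩
    · apply le_trans (Polynomial.natDegree_add_le _ _)
      apply max_le
      · exact le_trans (Polynomial.natDegree_C_mul_le _ _) (by simp)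
      · omega
    · have hev : R'.eval y = R.eval y - (x * Q0.eval y - Q0.eval (y - 1)) := by
        simp [hR', Polynomial.eval_comp]
      have := hQ1 y
      rw [hev] at this
      simp only [Polynomial.eval_add]
      linear_combination this

lemma geo (x : ℂ) (hx : x ≠ 1) (d : ℕ) :
    ∃ Q : ℂ[X], Q.natDegree ≤ d ∧ ∃ C : ℂ, ∀ n : ℕ,
      ∑ k ∈ Finset.Icc 1 n, (k : ℂ) ^ d * x ^ k = Q.eval (n : ℂ) * x ^ (n + 1) + C := by
  obtain ⟨Q, hQdeg, hQ⟩ := claimA x hx d (X ^ d) (by simp [Polynomial.natDegree_X_pow])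
  refine ⟨Q, hQdeg, -(Q.eval 0 * x), fun n => ?_⟩
  induction n with
  | zero => simp
  | succ n ihn =>
    rw [Finset.sum_Icc_succ_top (by omega)]
    rw [ihn]
    have h1 := hQ ((n : ℂ) + 1)
    simp only [Polynomial.eval_pow, Polynomial.eval_X, add_sub_cancel_right] at h1
    push_cast
    rw [← h1]
    ring

lemma rec_zero (m : ℕ) (hm : 0 < m) (a : Fin m → ℂ) (ha0 : a ⟨0, hm⟩ ≠ 0) (u : ℤ → ℂ)
    (hu : ∀ k : ℤ, u (k + m) = ∑ i : Fin m, a i * u (k + (i : ℕ)))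
    (h0 : ∀ j : ℤ, 0 ≤ j → j < m → u j = 0) : ∀ k : ℤ, u k = 0 := by
  have key : ∀ n : ℕ, ∀ k : ℤ, -(n : ℤ) ≤ k → k < (m : ℤ) + n → u k = 0 := by
    intro n
    induction n with
    | zero => intro k h1 h2; exact h0 k (by omega) (by omega)
    | succ n ih =>
      intro k h1 h2
      by_cases hc1 : k = (m : ℤ) + n
      · subst hc1
        rw [show (m : ℤ) + n = (n : ℤ) + m by ring, hu (n : ℤ)]
        apply Finset.sum_eq_zero
        intro i _
        rw [ih ((n : ℤ) + (i : ℕ)) (by omega) (by have := i.isLt; omega), mul_zero]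
      · by_cases hc2 : k = -((n : ℤ) + 1)
        · subst hc2
          have hrec' := hu (-((n : ℤ) + 1))
          have hL : u (-((n : ℤ) + 1) + m) = 0 := ih _ (by omega) (by omega)
          rw [hL] at hrec'
          set z : Fin m := ⟨0, hm⟩ with hz
          rw [← Finset.add_sum_erase _ _ (Finset.mem_univ z)] at hrec'
          have hrest : ∑ i ∈ Finset.univ.erase z, a i * u (-((n : ℤ) + 1) + (i : ℕ)) = 0 := by
            apply Finset.sum_eq_zero
            intro i hi
            have hiz : i ≠ z := (Finset.mem_erase.mp hi).1
            have hge : 1 ≤ (i : ℕ) := by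
              by_cases hp : (i : ℕ) = 0
              · exact absurd (Fin.ext hp) hiz
              · omega
            rw [ih (-((n : ℤ) + 1) + (i : ℕ)) (by omega) (by have := i.isLt; omega), mul_zero]
          rw [hrest, add_zero] at hrec'
          have hz0 : ((z : ℕ) : ℤ) = 0 := by simp [hz]
          rw [hz0, add_zero] at hrec'
          have := hrec'.symm
          rcases mul_eq_zero.mp this with hcase | hcase
          · exact absurd hcase ha0
          · exact hcase
        · exact ih k (by omega) (by omega)
  intro k
  exact key k.natAbs k (by omega) (by omega)

lemma rt_ne_zero (m : ℕ) (hm : 0 < m) (a : Fin m → ℂ) (ha0 : a ⟨0, hm⟩ ≠ 0)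
    (rt : Fin m → ℂ) (hroot : ∀ i, rt i ^ m = ∑ j : Fin m, a j * rt i ^ (j : ℕ)) :
    ∀ i, rt i ≠ 0 := by
  intro i hzero
  have h := hroot i
  rw [hzero] at h
  set z : Fin m := ⟨0, hm⟩ with hz
  rw [← Finset.add_sum_erase _ _ (Finset.mem_univ z)] at h
  have hrest : ∑ j ∈ Finset.univ.erase z, a j * (0 : ℂ) ^ (j : ℕ) = 0 := by
    apply Finset.sum_eq_zero
    intro j hj
    have hjz : j ≠ z := (Finset.mem_erase.mp hj).1
    have : (j : ℕ) ≠ 0 := fun hp => hjz (Fin.ext hp)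
    rw [zero_pow this, mul_zero]
  rw [hrest, add_zero] at h
  have hzn : ((z : ℕ)) = 0 := rfl
  rw [hzn, pow_zero, mul_one, zero_pow (by omega)] at h
  exact ha0 h.symm

lemma exists_c (m : ℕ) (hm : 0 < m) (a : Fin m → ℂ) (ha0 : a ⟨0, hm⟩ ≠ 0)
    (s : ℤ → ℂ) (hrec : ∀ k : ℤ, s (k + m) = ∑ i : Fin m, a i * s (k + (i : ℕ)))
    (rt : Fin m → ℂ) (hroot : ∀ i, rt i ^ m = ∑ j : Fin m, a j * rt i ^ (j : ℕ))
    (hrt : Function.Injective rt) :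
    ∃ c : Fin m → ℂ, ∀ k : ℤ, s k = ∑ i : Fin m, c i * rt i ^ k := by
  have hrtne := rt_ne_zero m hm a ha0 rt hroot
  set V : Matrix (Fin m) (Fin m) ℂ := (Matrix.vandermonde rt).transpose with hV
  have hdet : V.det ≠ 0 := by
    rw [Matrix.det_transpose, Matrix.det_vandermonde]
    apply Finset.prod_ne_zero_iff.mpr
    intro i _
    apply Finset.prod_ne_zero_iff.mpr
    intro j hj
    have : i < j := Finset.mem_Ioi.mp hj
    exact sub_ne_zero.mpr (fun he => (ne_of_gt this) (hrt he))
  have hunit : IsUnit V.det := isUnit_iff_ne_zero.mpr hdet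
  set b : Fin m → ℂ := fun i => s ((i : ℕ) : ℤ) with hb
  set c : Fin m → ℂ := V⁻¹.mulVec b with hc
  have hVc : V.mulVec c = b := by
    rw [hc, Matrix.mulVec_mulVec, Matrix.mul_nonsing_inv _ hunit, Matrix.one_mulVec]
  set u : ℤ → ℂ := fun k => s k - ∑ i : Fin m, c i * rt i ^ k with hu
  have hu_rec : ∀ k : ℤ, u (k + m) = ∑ i : Fin m, a i * u (k + (i : ℕ)) := by
    intro k
    have hgeo : ∀ j : Fin m, rt j ^ (k + (m : ℤ)) = ∑ i : Fin m, a i * rt j ^ (k + ((i : ℕ) : ℤ)) := by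
      intro j
      rw [zpow_add₀ (hrtne j), zpow_natCast, hroot j, Finset.mul_sum]
      apply Finset.sum_congr rfl
      intro i _
      rw [zpow_add₀ (hrtne j), zpow_natCast]
      ring
    simp only [hu]
    rw [hrec k]
    have : ∑ i : Fin m, c i * rt i ^ (k + (m : ℤ)) =
        ∑ j : Fin m, a j * ∑ i : Fin m, c i * rt i ^ (k + ((j : ℕ) : ℤ)) := by
      calc ∑ i : Fin m, c i * rt i ^ (k + (m : ℤ))
          = ∑ i : Fin m, ∑ j : Fin m, a j * (c i * rt i ^ (k + ((j : ℕ) : ℤ))) := by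
            apply Finset.sum_congr rfl
            intro i _
            rw [hgeo i, Finset.mul_sum]
            apply Finset.sum_congr rfl
            intro j _
            ring
        _ = ∑ j : Fin m, ∑ i : Fin m, a j * (c i * rt i ^ (k + ((j : ℕ) : ℤ))) :=
            Finset.sum_comm
        _ = ∑ j : Fin m, a j * ∑ i : Fin m, c i * rt i ^ (k + ((j : ℕ) : ℤ)) := by
            apply Finset.sum_congr rfl
            intro j _
            rw [Finset.mul_sum]
    rw [this, ← Finset.sum_sub_distrib]
    apply Finset.sum_congr rfl
    intro i _
    rw [mul_sub]
  have hu0 : ∀ j : ℤ, 0 ≤ j → j < m → u j = 0 := by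
    intro j hj1 hj2
    have hjn : j = ((j.toNat : ℕ) : ℤ) := by omega
    have hlt : j.toNat < m := by omega
    set i : Fin m := ⟨j.toNat, hlt⟩ with hi
    have := congrFun hVc i
    simp only [Matrix.mulVec, dotProduct, hV, Matrix.transpose_apply,
      Matrix.vandermonde, Matrix.of_apply, hb] at this
    simp only [hu]
    rw [hjn]
    have hix : ((j.toNat : ℕ) : ℤ) = (((i : ℕ) : ℕ) : ℤ) := by simp [hi]
    rw [hix]
    rw [sub_eq_zero]
    rw [← this]
    apply Finset.sum_congr rfl
    intro j' _
    rw [zpow_natCast]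
    ring
  have := rec_zero m hm a ha0 u hu_rec hu0
  exact ⟨c, fun k => by have hk := this k; simp only [hu] at hk; exact sub_eq_zero.mp hk⟩
section Main

open Polynomial

/-- Lemma 3.3 of the paper, special case `P(x) = x^d`: there exist
polynomials `P_1,…,P_m` of degree at most `d` and a constant `C ∈ ℂ` such that
`∑_{k=1}^n k^d·s_{hk+r} = ∑_{k=1}^m P_k(n)·s_{(n+k)h+r} + C` for every positive integer `n`. -/
theorem stmt_8 (m : ℕ) (hm : 2 ≤ m) (a : Fin m → ℂ)
    (ha1 : a ⟨0, by omega⟩ ≠ 0)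
    (s : ℤ → ℂ)
    (hrec : ∀ k : ℤ, s (k + m) = ∑ i : Fin m, a i * s (k + (i : ℕ)))
    (hmin : ∀ d : ℕ, d < m → ∀ b : Fin d → ℂ,
      ¬ (∀ k : ℤ, s (k + d) = ∑ i : Fin d, b i * s (k + (i : ℕ))))
    (hs : ∃ i ∈ Finset.Icc (1 : ℤ) (m : ℤ), s i ≠ 0)
    (rt : Fin m → ℂ)
    (hroot : ∀ i, rt i ^ m = ∑ j : Fin m, a j * rt i ^ (j : ℕ))
    (hrt : Function.Injective rt)
    (d : ℕ) (h r : ℤ) (hh : h ≠ 0)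
    (hdist : ∀ i j : Fin m, rt i ^ h = rt j ^ h → i = j)
    (hne1 : ∀ i : Fin m, rt i ^ h ≠ 1) :
    ∃ Ps : Fin m → Polynomial ℂ, (∀ k, (Ps k).natDegree ≤ d) ∧
      ∃ C : ℂ, ∀ n : ℕ, 0 < n →
        ∑ k ∈ Finset.Icc 1 n, (k : ℂ) ^ d * s (h * (k : ℤ) + r) =
          (∑ k : Fin m, (Ps k).eval (n : ℂ) * s (((n : ℤ) + ((k : ℕ) : ℤ) + 1) * h + r))
            + C := by
  have hm' : 0 < m := by omega
  clear hmin hs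
  have hrtne := rt_ne_zero m hm' a ha1 rt hroot
  obtain ⟨c, hcs⟩ := exists_c m hm' a ha1 s hrec rt hroot hrt
  set x : Fin m → ℂ := fun i => rt i ^ h with hx
  have hxne : ∀ i, x i ≠ 0 := fun i => zpow_ne_zero h (hrtne i)
  have hg : ∀ i : Fin m, ∃ Q : ℂ[X], Q.natDegree ≤ d ∧ ∃ C : ℂ, ∀ n : ℕ,
      ∑ k ∈ Finset.Icc 1 n, (k : ℂ) ^ d * (x i) ^ k = Q.eval (n : ℂ) * (x i) ^ (n + 1) + C :=
    fun i => geo (x i) (hne1 i) d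
  choose Q hQdeg Cg hQ using hg
  -- Vandermonde in x
  set M : Matrix (Fin m) (Fin m) ℂ := Matrix.vandermonde x with hM
  have hdet : M.det ≠ 0 := by
    rw [hM, Matrix.det_vandermonde]
    apply Finset.prod_ne_zero_iff.mpr
    intro i _
    apply Finset.prod_ne_zero_iff.mpr
    intro j hj
    have hij : i < j := Finset.mem_Ioi.mp hj
    exact sub_ne_zero.mpr (fun he => (ne_of_gt hij) (hdist j i he))
  have hMW : M * M⁻¹ = 1 := Matrix.mul_nonsing_inv _ (isUnit_iff_ne_zero.mpr hdet)
  set W := M⁻¹ with hW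
  set Ps : Fin m → ℂ[X] := fun j => ∑ i : Fin m, Polynomial.C (W j i) * Q i with hPs
  have hPsdeg : ∀ j, (Ps j).natDegree ≤ d := by
    intro j
    apply Polynomial.natDegree_sum_le_of_forall_le
    intro i _
    exact le_trans (Polynomial.natDegree_C_mul_le _ _) (hQdeg i)
  have hMW1 : ∀ i i' : Fin m, ∑ j : Fin m, M i j * W j i' = if i = i' then 1 else 0 := by
    intro i i'
    have := congrFun (congrFun hMW i) i'
    rw [Matrix.mul_apply] at this
    simpa [Matrix.one_apply] using this
  have key : ∀ (i : Fin m) (y : ℂ),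
      ∑ j : Fin m, (Ps j).eval y * (x i) ^ (j : ℕ) = (Q i).eval y := by
    intro i y
    calc ∑ j : Fin m, (Ps j).eval y * (x i) ^ (j : ℕ)
        = ∑ j : Fin m, ∑ i' : Fin m, (Q i').eval y * (M i j * W j i') := by
          apply Finset.sum_congr rfl
          intro j _
          rw [hPs]
          simp only [Polynomial.eval_finset_sum, Polynomial.eval_mul, Polynomial.eval_C]
          rw [Finset.sum_mul]
          apply Finset.sum_congr rfl
          intro i' _
          have : M i j = (x i) ^ (j : ℕ) := by rw [hM]; rfl
          rw [this]
          ring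
      _ = ∑ i' : Fin m, ∑ j : Fin m, (Q i').eval y * (M i j * W j i') := Finset.sum_comm
      _ = ∑ i' : Fin m, (Q i').eval y * (if i = i' then 1 else 0) := by
          apply Finset.sum_congr rfl
          intro i' _
          rw [← hMW1 i i', Finset.mul_sum]
      _ = (Q i).eval y := by simp
  refine ⟨Ps, hPsdeg, ∑ i : Fin m, c i * rt i ^ r * Cg i, fun n _ => ?_⟩
  -- left side
  have hterm : ∀ (i : Fin m) (k : ℕ), rt i ^ (h * (k : ℤ) + r) = (x i) ^ k * rt i ^ r := by
    intro i k
    rw [zpow_add₀ (hrtne i), zpow_mul, zpow_natCast]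
  have hL : ∑ k ∈ Finset.Icc 1 n, (k : ℂ) ^ d * s (h * (k : ℤ) + r) =
      ∑ i : Fin m, c i * rt i ^ r * ((Q i).eval (n : ℂ) * (x i) ^ (n + 1) + Cg i) := by
    calc ∑ k ∈ Finset.Icc 1 n, (k : ℂ) ^ d * s (h * (k : ℤ) + r)
        = ∑ k ∈ Finset.Icc 1 n, ∑ i : Fin m,
            c i * rt i ^ r * ((k : ℂ) ^ d * (x i) ^ k) := by
          apply Finset.sum_congr rfl
          intro k _
          rw [hcs (h * (k : ℤ) + r), Finset.mul_sum]
          apply Finset.sum_congr rfl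
          intro i _
          rw [hterm i k]
          ring
      _ = ∑ i : Fin m, ∑ k ∈ Finset.Icc 1 n,
            c i * rt i ^ r * ((k : ℂ) ^ d * (x i) ^ k) := Finset.sum_comm
      _ = ∑ i : Fin m, c i * rt i ^ r * ((Q i).eval (n : ℂ) * (x i) ^ (n + 1) + Cg i) := by
          apply Finset.sum_congr rfl
          intro i _
          rw [← Finset.mul_sum, hQ i n]
  -- right side
  have hterm2 : ∀ (i j : Fin m),
      rt i ^ ((((n : ℤ) + ((j : ℕ) : ℤ) + 1)) * h + r) =
        (x i) ^ (n + 1) * (x i) ^ (j : ℕ) * rt i ^ r := by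
    intro i j
    rw [zpow_add₀ (hrtne i), mul_comm ((n : ℤ) + ((j : ℕ) : ℤ) + 1) h, zpow_mul]
    have : ((n : ℤ) + ((j : ℕ) : ℤ) + 1) = (((n + 1 : ℕ) : ℤ)) + ((j : ℕ) : ℤ) := by push_cast; ring
    rw [this, zpow_add₀ (hxne i), zpow_natCast, zpow_natCast]
  have hR : ∑ k : Fin m, (Ps k).eval (n : ℂ) * s (((n : ℤ) + ((k : ℕ) : ℤ) + 1) * h + r) =
      ∑ i : Fin m, c i * rt i ^ r * ((Q i).eval (n : ℂ) * (x i) ^ (n + 1)) := by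
    calc ∑ j : Fin m, (Ps j).eval (n : ℂ) * s (((n : ℤ) + ((j : ℕ) : ℤ) + 1) * h + r)
        = ∑ j : Fin m, ∑ i : Fin m,
            c i * rt i ^ r * (x i) ^ (n + 1) * ((Ps j).eval (n : ℂ) * (x i) ^ (j : ℕ)) := by
          apply Finset.sum_congr rfl
          intro j _
          rw [hcs (((n : ℤ) + ((j : ℕ) : ℤ) + 1) * h + r), Finset.mul_sum]
          apply Finset.sum_congr rfl
          intro i _
          rw [hterm2 i j]
          ring
      _ = ∑ i : Fin m, ∑ j : Fin m,
            c i * rt i ^ r * (x i) ^ (n + 1) * ((Ps j).eval (n : ℂ) * (x i) ^ (j : ℕ)) :=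
          Finset.sum_comm
      _ = ∑ i : Fin m, c i * rt i ^ r * ((Q i).eval (n : ℂ) * (x i) ^ (n + 1)) := by
          apply Finset.sum_congr rfl
          intro i _
          rw [← Finset.mul_sum, key i (n : ℂ)]
          ring
  rw [hL, hR, ← Finset.sum_add_distrib]
  apply Finset.sum_congr rfl
  intro i _
  ring

end Main
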